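/- arXiv:cond-mat/0506613 — 2 statements merged into one kernel-verified Lean document; each statement's English description precedes it below -/
import Mathlib

section
/- Let Δ ∈ ℂ and let e₃, e₄, e₅ ∈ ℂ be nonzero and such that all denominators in the n=5 bound-pair Bethe equations are nonzero both at (e₃,e₄,e₅) and at (1/e₃, 1/e₄, 1/e₅). If (e₃,e₄,e₅) satisfies all three n=5 bound-pair Bethe equations, then (1/e₃, 1/e₄, 1/e₅) also satisfies all three equations. -/
/-!
Under `x ↦ 1/x` every factor of a Bethe equation is replaced by its reciprocal: in
`(1 - a x) / (x - a)` numerator and denominator swap up to the common factor `1/x`, and in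
`(1 - a x + x y) / (1 - a y + x y)` up to the common factor `1/(x y)`. The left-hand side
`x ^ (N - 1)` is inverted too, so each equation is carried to the reciprocal equation at
`(1/x, 1/y, 1/z)`.
-/

/-- The bound-pair Bethe equation for the unknown `x`, paired with `y` and `z`, in the
`n = 5` block of the zero-field six-vertex model with `N` columns. -/
def betheEq5 (N : ℕ) (Δ x y z : ℂ) : Prop :=
  x ^ (N - 1) =
    ((1 - 2*Δ*x) / (x - 2*Δ)) * ((1 - 2*Δ*x + x*y) / (1 - 2*Δ*y + x*y)) *
      ((1 - 2*Δ*x + x*z) / (1 - 2*Δ*z + x*z))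

section Field

variable {K : Type*} [Field K] {x y : K}

theorem one_sub_mul_one_div_div_one_div_sub (a : K) (hx : x ≠ 0) :
    (1 - a * (1 / x)) / (1 / x - a) = ((1 - a * x) / (x - a))⁻¹ := by
  have hnum : 1 - a * (1 / x) = (x - a) / x := by field_simp
  have hden : 1 / x - a = (1 - a * x) / x := by field_simp
  rw [hnum, hden, div_div_div_cancel_right₀ hx, inv_div]

theorem one_sub_mul_one_div_add_div_one_sub_mul_one_div_add (a : K) (hx : x ≠ 0)
    (hy : y ≠ 0) :
    (1 - a * (1 / x) + 1 / x * (1 / y)) / (1 - a * (1 / y) + 1 / x * (1 / y)) =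
      ((1 - a * x + x * y) / (1 - a * y + x * y))⁻¹ := by
  have hnum : 1 - a * (1 / x) + 1 / x * (1 / y) = (1 - a * y + x * y) / (x * y) := by
    field_simp
    ring
  have hden : 1 - a * (1 / y) + 1 / x * (1 / y) = (1 - a * x + x * y) / (x * y) := by
    field_simp
    ring
  rw [hnum, hden, div_div_div_cancel_right₀ (mul_ne_zero hx hy), inv_div]

end Field

theorem betheEq5_one_div {N : ℕ} {Δ x y z : ℂ} (hx : x ≠ 0) (hy : y ≠ 0) (hz : z ≠ 0)
    (h : betheEq5 N Δ x y z) : betheEq5 N Δ (1 / x) (1 / y) (1 / z) := by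
  unfold betheEq5 at h ⊢
  rw [one_div_pow, h, one_sub_mul_one_div_div_one_div_sub _ hx,
    one_sub_mul_one_div_add_div_one_sub_mul_one_div_add _ hx hy,
    one_sub_mul_one_div_add_div_one_sub_mul_one_div_add _ hx hz, one_div, mul_inv, mul_inv]

theorem n5_bethe_inversion_general (N : ℕ) (Δ e₃ e₄ e₅ : ℂ)
    (h₃ : e₃ ≠ 0) (h₄ : e₄ ≠ 0) (h₅ : e₅ ≠ 0)
    (heq₃ : betheEq5 N Δ e₃ e₄ e₅) (heq₄ : betheEq5 N Δ e₄ e₃ e₅)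
    (heq₅ : betheEq5 N Δ e₅ e₃ e₄) :
    betheEq5 N Δ (1/e₃) (1/e₄) (1/e₅) ∧ betheEq5 N Δ (1/e₄) (1/e₃) (1/e₅) ∧
      betheEq5 N Δ (1/e₅) (1/e₃) (1/e₄) :=
  ⟨betheEq5_one_div h₃ h₄ h₅ heq₃, betheEq5_one_div h₄ h₃ h₅ heq₄,
    betheEq5_one_div h₅ h₃ h₄ heq₅⟩

/-- If `(e₃, e₄, e₅)` solves the three `n = 5` bound-pair Bethe equations (all
denominators nonzero at `(e₃,e₄,e₅)` and at `(1/e₃, 1/e₄, 1/e₅)`), then so does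
`(1/e₃, 1/e₄, 1/e₅)`. -/
theorem n5_bethe_inversion (N : ℕ) (hN : 0 < N) (hNeven : Even N) (Δ e₃ e₄ e₅ : ℂ)
    (h₃ : e₃ ≠ 0) (h₄ : e₄ ≠ 0) (h₅ : e₅ ≠ 0)
    (d₃ : e₃ - 2*Δ ≠ 0) (d₄ : e₄ - 2*Δ ≠ 0) (d₅ : e₅ - 2*Δ ≠ 0)
    (d₃₄ : 1 - 2*Δ*e₄ + e₃*e₄ ≠ 0) (d₄₃ : 1 - 2*Δ*e₃ + e₃*e₄ ≠ 0)
    (d₃₅ : 1 - 2*Δ*e₅ + e₃*e₅ ≠ 0) (d₅₃ : 1 - 2*Δ*e₃ + e₃*e₅ ≠ 0)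
    (d₄₅ : 1 - 2*Δ*e₅ + e₄*e₅ ≠ 0) (d₅₄ : 1 - 2*Δ*e₄ + e₄*e₅ ≠ 0)
    (d₃' : 1/e₃ - 2*Δ ≠ 0) (d₄' : 1/e₄ - 2*Δ ≠ 0) (d₅' : 1/e₅ - 2*Δ ≠ 0)
    (d₃₄' : 1 - 2*Δ*(1/e₄) + (1/e₃)*(1/e₄) ≠ 0) (d₄₃' : 1 - 2*Δ*(1/e₃) + (1/e₃)*(1/e₄) ≠ 0)
    (d₃₅' : 1 - 2*Δ*(1/e₅) + (1/e₃)*(1/e₅) ≠ 0) (d₅₃' : 1 - 2*Δ*(1/e₃) + (1/e₃)*(1/e₅) ≠ 0)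
    (d₄₅' : 1 - 2*Δ*(1/e₅) + (1/e₄)*(1/e₅) ≠ 0) (d₅₄' : 1 - 2*Δ*(1/e₄) + (1/e₄)*(1/e₅) ≠ 0)
    (heq₃ : betheEq5 N Δ e₃ e₄ e₅) (heq₄ : betheEq5 N Δ e₄ e₃ e₅)
    (heq₅ : betheEq5 N Δ e₅ e₃ e₄) :
    betheEq5 N Δ (1/e₃) (1/e₄) (1/e₅) ∧ betheEq5 N Δ (1/e₄) (1/e₃) (1/e₅) ∧
      betheEq5 N Δ (1/e₅) (1/e₃) (1/e₄) :=
  n5_bethe_inversion_general N Δ e₃ e₄ e₅ h₃ h₄ h₅ heq₃ heq₄ heq₅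
end

section
/- Let N ≥ 8 be an even integer, y ∈ ℂ nonzero, and Δ = −(y + 1/y)/2. Let r ∈ ℂ be nonzero with r + 1/r ≠ 2Δ and suppose r satisfies r^N − 3Δ r^{N−1} + 2Δ²(r^{N−2} + r²) − 3Δ r + 1 = 0. Set σ = (4 − 2Δ(r + 1/r))/(r + 1/r − 2Δ). Then the polynomial z² − σz + 1 divides, in ℂ[z], the polynomial H(z) = (z − y)^{N−1}(zy³ − 1)(z²y⁴ − σ z y² + 1) + (zy − 1)^{N−1}(z − y³)(z² − σ z y² + y⁴). -/
/-!
The roots of `z² − σz + 1` are `t = (1 + ry)/(r + y)` and `1/t`. Multiplied by `r + y`, every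
linear factor of `H` evaluated at `t` becomes explicit in `r`, `y`, `Δ`, and `ty − 1 = −r(t − y)`;
this turns `(r + y)³ H(t)` into a multiple of the reciprocal polynomial at `r`, so `H(t) = 0`.
For even `N`, `H` is self-reciprocal of degree `N + 2`, so `1/t` is a root too. In the double-root
case `t = 1/t = ±1`, `H(t) = 0` forces either `y² = 1`, where `z² − σz + 1` is visibly a factor
of `H`, or `y³ = t`, where `z − t` divides both `zy³ − 1` and `z − y³` and the cofactor again
vanishes at `t`.
-/

open Polynomial

noncomputable def boundPairH {R : Type*} [CommRing R] (n : ℕ) (y σ : R) : R[X] :=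
  (X - C y)^n * (X * C y^3 - 1) * (X^2 * C y^4 - C σ * X * C y^2 + 1)
    + (X * C y - 1)^n * (X - C y^3) * (X^2 - C σ * X * C y^2 + C y^4)

/-- `r^(M+2) − 3Δr^(M+1) + 2Δ²(r^M + r²) − 3Δr + 1`, indexed by `M = N − 2`. -/
def boundPairPoly {R : Type*} [CommRing R] (M : ℕ) (Δ r : R) : R :=
  r^M * (r^2 - 3*Δ*r + 2*Δ^2) + (2*Δ^2*r^2 - 3*Δ*r + 1)

section CommRing

variable {R : Type*} [CommRing R] {n : ℕ} {y σ : R}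

@[simp]
theorem eval_boundPairH (z : R) :
    eval z (boundPairH n y σ) =
      (z - y)^n * (z*y^3 - 1) * (z^2*y^4 - σ*z*y^2 + 1)
        + (z*y - 1)^n * (z - y^3) * (z^2 - σ*z*y^2 + y^4) := by
  simp only [boundPairH, eval_add, eval_mul, eval_pow, eval_sub, eval_X, eval_C, eval_one]

theorem dvd_boundPairH_of_sq_eq_one (hy : y^2 = 1) :
    X^2 - C σ * X + 1 ∣ boundPairH n y σ := by
  have hC : (C y)^2 = 1 := by rw [← C_pow, hy, C_1]
  refine ⟨(X - C y)^n * (X * C y^3 - 1) + (X * C y - 1)^n * (X - C y^3), ?_⟩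
  unfold boundPairH
  linear_combination ((X - C y)^n * (X * C y^3 - 1) * (X^2 * (C y^2 + 1) - C σ * X)
    + (X * C y - 1)^n * (X - C y^3) * (C y^2 + 1 - C σ * X)) * hC

theorem mul_sub_one_pow_of_sq_eq_one {t : R} (hn : Odd n) (ht : t^2 = 1) :
    (t*y - 1)^n = -(t * (t - y)^n) := by
  have htn : t^n = t := by
    obtain ⟨k, rfl⟩ := hn
    rw [pow_succ, pow_mul, ht, one_pow, one_mul]
  rw [show t*y - 1 = t * -(t - y) by linear_combination ht, mul_pow, hn.neg_pow, htn, mul_neg]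

end CommRing

section Field

variable {K : Type*} [Field K] {n : ℕ} {y t : K}

theorem eval_inv_boundPairH {σ : K} (hn : Odd n) (ht : t ≠ 0) :
    eval t⁻¹ (boundPairH n y σ) = t⁻¹^(n+3) * eval t (boundPairH n y σ) := by
  have h₁ : t⁻¹ - y = t⁻¹ * -(t*y - 1) := by field_simp; ring
  have h₂ : t⁻¹ * y - 1 = t⁻¹ * -(t - y) := by field_simp; ring
  simp only [eval_boundPairH, h₁, h₂, mul_pow, hn.neg_pow, inv_pow]
  field_simp
  ring

theorem X_sq_sub_C_add_inv_mul_X_add_one (ht : t ≠ 0) :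
    (X^2 - C (t + t⁻¹) * X + 1 : K[X]) = (X - C t) * (X - C t⁻¹) := by
  have h : C t * C t⁻¹ = (1 : K[X]) := by rw [← C_mul, mul_inv_cancel₀ ht, C_1]
  rw [C_add]
  linear_combination -h

theorem eval_boundPairH_add_self (hn : Odd n) (ht : t^2 = 1) :
    eval t (boundPairH n y (t + t)) = 2 * (y^2 - 1)^2 * (t - y)^n * (t*y^3 - 1) := by
  rw [eval_boundPairH, mul_sub_one_pow_of_sq_eq_one hn ht]
  linear_combination (t - y)^n * ((t*y^3 - 1) * y^2 * (y^2 - 2) - (y^2 - 1)^2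
    - t * (t - y^3) * (1 - 2*y^2)) * ht

theorem sq_X_sub_C_dvd_boundPairH (hn : Odd n) (ht : t^2 = 1) (hy : y^3 = t) :
    (X - C t)^2 ∣ boundPairH n y (t + t) := by
  set A : K[X] := X^2 * C y^4 - C (t + t) * X * C y^2 + 1
  set B : K[X] := X^2 - C (t + t) * X * C y^2 + C y^4
  set G : K[X] := C t * (X - C y)^n * A + (X * C y - 1)^n * B
  have hCt : (C t)^2 = (1 : K[X]) := by rw [← C_pow, ht, C_1]
  have hCy : (C y)^3 = C t := by rw [← C_pow, hy]
  have hG : boundPairH n y (t + t) = (X - C t) * G := by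
    unfold boundPairH
    linear_combination ((X - C y)^n * A * X - (X * C y - 1)^n * B) * hCy + (X - C y)^n * A * hCt
  have hGt : G.IsRoot t := by
    simp only [G, A, B, IsRoot, eval_add, eval_mul, eval_pow, eval_sub, eval_X, eval_C, eval_one,
      mul_sub_one_pow_of_sq_eq_one hn ht]
    linear_combination t * (t - y)^n * (y^4 - 1) * ht
  rw [hG, pow_two]
  exact mul_dvd_mul_left _ (dvd_iff_isRoot.2 hGt)

theorem dvd_boundPairH_add_self_of_eval_eq_zero [NeZero (2 : K)] (hn : Odd n) (ht : t^2 = 1)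
    (hroot : eval t (boundPairH n y (t + t)) = 0) :
    X^2 - C (t + t) * X + 1 ∣ boundPairH n y (t + t) := by
  rw [eval_boundPairH_add_self hn ht] at hroot
  obtain ((((h2 | hy) | hty) | hy3)) : (((2 : K) = 0 ∨ (y^2 - 1)^2 = 0) ∨ (t - y)^n = 0)
      ∨ t*y^3 - 1 = 0 := by simpa only [mul_eq_zero] using hroot
  · exact absurd h2 two_ne_zero
  · exact dvd_boundPairH_of_sq_eq_one (sub_eq_zero.1 (pow_eq_zero_iff two_ne_zero |>.1 hy))
  · rw [sub_eq_zero.1 (pow_eq_zero_iff hn.pos.ne' |>.1 hty)] at ht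
    exact dvd_boundPairH_of_sq_eq_one ht
  · have hCt : (C t)^2 = (1 : K[X]) := by rw [← C_pow, ht, C_1]
    rw [show (X^2 - C (t + t) * X + 1 : K[X]) = (X - C t)^2 by rw [C_add]; linear_combination -hCt]
    exact sq_X_sub_C_dvd_boundPairH hn ht (by linear_combination t * hy3 - y^3 * ht)

theorem dvd_boundPairH_of_eval_eq_zero [NeZero (2 : K)] (hn : Odd n) (ht : t ≠ 0)
    (hroot : eval t (boundPairH n y (t + t⁻¹)) = 0) :
    X^2 - C (t + t⁻¹) * X + 1 ∣ boundPairH n y (t + t⁻¹) := by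
  by_cases htt : t = t⁻¹
  · have ht2 : t^2 = 1 := by rw [sq]; nth_rw 2 [htt]; exact mul_inv_cancel₀ ht
    rw [← htt] at hroot ⊢
    exact dvd_boundPairH_add_self_of_eval_eq_zero hn ht2 hroot
  · have hroot' : eval t⁻¹ (boundPairH n y (t + t⁻¹)) = 0 := by
      rw [eval_inv_boundPairH hn ht, hroot, mul_zero]
    rw [X_sq_sub_C_add_inv_mul_X_add_one ht]
    exact (isCoprime_X_sub_C_of_isUnit_sub (sub_ne_zero.2 htt).isUnit).mul_dvd
      (dvd_iff_isRoot.2 hroot) (dvd_iff_isRoot.2 hroot')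

variable {Δ r : K}

theorem add_inv_sub_two_mul_eq (hy : y ≠ 0) (hr : r ≠ 0) (hΔ : 2*Δ*y = -(y^2 + 1)) :
    r + 1/r - 2*Δ = (r + y) * (1 + r*y) / (r*y) := by
  field_simp
  linear_combination (-r) * hΔ

theorem div_add_inv_sub_two_mul_eq (hy : y ≠ 0) (hr : r ≠ 0) (hΔ : 2*Δ*y = -(y^2 + 1))
    (hry : r + y ≠ 0) (hry' : 1 + r*y ≠ 0) :
    (4 - 2*Δ*(r + 1/r)) / (r + 1/r - 2*Δ) = (1 + r*y)/(r + y) + ((1 + r*y)/(r + y))⁻¹ := by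
  rw [add_inv_sub_two_mul_eq hy hr hΔ]
  field_simp
  linear_combination (-(r^2 + 1)) * hΔ

theorem eval_boundPairH_eq_zero {M : ℕ} (hM : Even M) (hΔ : 2*Δ*y = -(y^2 + 1))
    (hR : boundPairPoly M Δ r = 0) (hry : r + y ≠ 0) (ht : (r + y) * t = 1 + r*y) (ht0 : t ≠ 0) :
    eval t (boundPairH (M + 1) y (t + t⁻¹)) = 0 := by
  have h_t_sub_y : (r + y) * (t - y) = 1 - y^2 := by linear_combination ht
  have h_ty_sub_one : (r + y) * (t*y - 1) = r * (y^2 - 1) := by linear_combination y * ht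
  have h_ty_add_one : (r + y) * (t*y + 1) = 2*y*(1 - Δ*r) := by linear_combination y * ht + r * hΔ
  have h_t_add_y : (r + y) * (t + y) = 2*y*(r - Δ) := by linear_combination ht + hΔ
  have h_ty3_sub_one : (r + y) * (t*y^3 - 1) = (y^2 - 1)*y*(1 - 2*Δ*r) := by
    linear_combination y^3 * ht + r * (y^2 - 1) * hΔ
  have h_t_sub_y3 : (r + y) * (t - y^3) = (1 - y^2)*y*(r - 2*Δ) := by
    linear_combination ht + (1 - y^2) * hΔ
  have q₁ : t^2*y^4 - (t + t⁻¹)*t*y^2 + 1 = (y^2 - 1) * ((t*y - 1) * (t*y + 1)) := by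
    field_simp; ring
  have q₂ : t^2 - (t + t⁻¹)*t*y^2 + y^4 = (1 - y^2) * ((t - y) * (t + y)) := by
    field_simp; ring
  have key : (r + y)^3 * ((t*y^3 - 1) * ((y^2 - 1) * ((t*y - 1) * (t*y + 1)))
      - r^(M+1) * ((t - y^3) * ((1 - y^2) * ((t - y) * (t + y)))))
      = 2*r*y^2*(y^2 - 1)^3 * boundPairPoly M Δ r := by
    calc _ = (y^2 - 1) * (((r + y) * (t*y^3 - 1)) * ((r + y) * (t*y - 1)) * ((r + y) * (t*y + 1)))
          - r^(M+1) * (1 - y^2)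
            * (((r + y) * (t - y^3)) * ((r + y) * (t - y)) * ((r + y) * (t + y))) := by ring
      _ = _ := by
        rw [h_t_sub_y, h_ty_sub_one, h_ty_add_one, h_t_add_y, h_ty3_sub_one, h_t_sub_y3]
        unfold boundPairPoly
        ring
  rw [hR, mul_zero] at key
  have hbracket := (mul_eq_zero.1 key).resolve_left (pow_ne_zero _ hry)
  have hflip : (t*y - 1)^(M+1) = -(r^(M+1) * (t - y)^(M+1)) := by
    rw [show t*y - 1 = -(r * (t - y)) by linear_combination ht, hM.add_one.neg_pow, mul_pow]
  rw [eval_boundPairH, hflip, q₁, q₂]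
  linear_combination (t - y)^(M+1) * hbracket

end Field

/-- For even `N ≥ 8`, `y ≠ 0`, `Δ = −(y + 1/y)/2`, and `r ≠ 0` a root of the
reciprocal polynomial `r^N − 3Δr^(N−1) + 2Δ²(r^(N−2)+r²) − 3Δr + 1` with
`r + 1/r ≠ 2Δ`, setting `σ = (4 − 2Δ(r + 1/r))/(r + 1/r − 2Δ)`, the polynomial
`z² − σz + 1` divides
`H(z) = (z−y)^(N−1)(zy³−1)(z²y⁴−σzy²+1) + (zy−1)^(N−1)(z−y³)(z²−σzy²+y⁴)`
in `ℂ[z]`. -/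
theorem n4_boundPair_divisibility (N : ℕ) (hN : 8 ≤ N) (hNeven : Even N)
    (y : ℂ) (hy : y ≠ 0) (Δ : ℂ) (hΔ : Δ = -(y + 1/y)/2)
    (r : ℂ) (hr : r ≠ 0) (hden : r + 1/r ≠ 2*Δ)
    (hroot : r^N - 3*Δ*r^(N-1) + 2*Δ^2*(r^(N-2) + r^2) - 3*Δ*r + 1 = 0)
    (σ : ℂ) (hσ : σ = (4 - 2*Δ*(r + 1/r))/(r + 1/r - 2*Δ)) :
    (X^2 - C σ * X + 1 : Polynomial ℂ) ∣
      ((X - C y)^(N-1) * (X * C y^3 - 1) * (X^2 * C y^4 - C σ * X * C y^2 + 1)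
        + (X * C y - 1)^(N-1) * (X - C y^3) * (X^2 - C σ * X * C y^2 + C y^4)) := by
  obtain ⟨M, rfl⟩ : ∃ M, N = M + 2 := ⟨N - 2, by omega⟩
  have hM : Even M := (Nat.even_add.1 hNeven).2 even_two
  have hΔy : 2*Δ*y = -(y^2 + 1) := by rw [hΔ]; field_simp
  have hR : boundPairPoly M Δ r = 0 := by
    rw [boundPairPoly, ← hroot, Nat.add_sub_cancel, show M + 2 - 1 = M + 1 from rfl]
    ring
  obtain ⟨⟨hry, hry'⟩, -⟩ : (r + y ≠ 0 ∧ 1 + r*y ≠ 0) ∧ r*y ≠ 0 := by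
    simpa only [add_inv_sub_two_mul_eq hy hr hΔy, div_ne_zero_iff, mul_ne_zero_iff]
      using sub_ne_zero.2 hden
  rw [hσ, div_add_inv_sub_two_mul_eq hy hr hΔy hry hry']
  exact dvd_boundPairH_of_eval_eq_zero hM.add_one (div_ne_zero hry' hry)
    (eval_boundPairH_eq_zero hM hΔy hR hry (mul_div_cancel₀ _ hry) (div_ne_zero hry' hry))
end
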